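/- arXiv:2111.01000 — 3 statements merged into one kernel-verified Lean document; each statement's English description precedes it below -/
import Mathlib

section
/- Let M be a locally small category, A a small full subcategory of M, and i* : M ⥤ Psh(A) the restricted Yoneda functor. The following four conditions are equivalent: (i) for every object X of M, the sieve on X generated by all morphisms with target X and source in A is effectively epimorphic; (ii) for every object X of M, that sieve is universally effectively epimorphic, i.e., its pullback along any morphism X' → X of M is again an effectively epimorphic sieve on X'; (iii) for every object X of M, the canonical cocone exhibits X as the colimit in M of the forgetful functor A_{/X} → M, where A_{/X} is the comma category whose objects are pairs (a, u) with a an object of A and u : a → X a morphism of M; (iv) the functor i* is fully faithful. -/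
/-!
A sieve is effectively epimorphic iff every representable presheaf is a sheaf for it. Hence (ii)
says that the sieves `coverByImage ι X` are covering for the canonical topology, i.e. `ι` is
cover-dense for it, and restriction of sheaves along a full cover-dense functor is fully faithful;
on representables this is (iv). Conditions (iv) and (iii) are two descriptions of the density of
`ι`. Under (iii), a compatible family on `coverByImage ι X` restricts to a cocone over `A_{/X}`,
and the induced map out of `X` amalgamates it, which is (i). Finally (i) implies (ii): a sieve
containing `coverByImage ι X` inherits the sheaf property from it, because the separatedness
needed along an arrow `Z ⟶ X` comes from (i) at `Z`.
-/

open CategoryTheory CategoryTheory.Limits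

universe v u

namespace Stmt0

variable {A : Type v} [SmallCategory A] {M : Type u} [Category.{v} M]

/-- The canonical cocone on the forgetful functor `A_{/X} ⥤ M`, with apex `X`. -/
@[simps]
def canonicalCocone (ι : A ⥤ M) (X : M) :
    Cocone (CostructuredArrow.proj ι X ⋙ ι) where
  pt := X
  ι :=
    { app := fun f => f.hom
      naturality := fun f f' g => by
        have := CostructuredArrow.w g
        dsimp at this ⊢
        exact this.trans (Category.comp_id _).symm }

open Presieve Functor

section

variable {C : Type*} [Category* C] {D : Type*} [Category* D] (G : C ⥤ D)

lemma coverByImage_le_pullback {X Y : D} (f : Y ⟶ X) :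
    Sieve.coverByImage G Y ≤ (Sieve.coverByImage G X).pullback f :=
  fun _ _ ⟨s⟩ => ⟨⟨s.obj, s.lift, s.map ≫ f, by rw [s.fac_assoc]⟩⟩

lemma isSeparatedFor_of_le {X : C} {P : Cᵒᵖ ⥤ Type*} {R R' : Presieve X} (h : R ≤ R')
    (hR : IsSeparatedFor P R) : IsSeparatedFor P R' :=
  fun x t₁ t₂ h₁ h₂ =>
    hR (x.restrict h) t₁ t₂ (isAmalgamation_restrict h x t₁ h₁) (isAmalgamation_restrict h x t₂ h₂)

lemma effectiveEpimorphic_of_coverByImage_le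
    (h : ∀ Z : D, (Sieve.coverByImage G Z).EffectiveEpimorphic)
    {X : D} {S : Sieve X} (hS : Sieve.coverByImage G X ≤ S) : S.EffectiveEpimorphic := by
  simp only [Sieve.EffectiveEpimorphic.iff_forall_isSheafFor_yoneda] at h ⊢
  exact fun Y => isSheafFor_subsieve_aux _ hS (h X Y) fun Z f _ =>
    isSeparatedFor_of_le (coverByImage_le_pullback G f) (h Z Y).isSeparatedFor

lemma isCoverDense_canonicalTopology
    (h : ∀ (X X' : D) (f : X' ⟶ X), ((Sieve.coverByImage G X).pullback f).EffectiveEpimorphic) :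
    G.IsCoverDense (Sheaf.canonicalTopology D) where
  is_cover X := Sheaf.mem_finestTopology_of_forall_isSheafFor <| by
    rintro _ ⟨Y, rfl⟩ Z f
    exact (Sieve.EffectiveEpimorphic.iff_forall_isSheafFor_yoneda _).1 (h X Z f) Y

end

variable (ι : A ⥤ M)

abbrev restrictedYoneda : M ⥤ Aᵒᵖ ⥤ Type v :=
  yoneda ⋙ (whiskeringLeft _ _ _).obj ι.op

lemma restrictedYoneda_map_bijective (J : GrothendieckTopology M) [J.Subcanonical] [ι.Full]
    [ι.IsCoverDense J] (X Y : M) :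
    Function.Bijective ((restrictedYoneda ι).map : (X ⟶ Y) → _) :=
  (IsCoverDense.restrictHomEquivHom (ℱ' := J.yoneda.obj Y)).symm.bijective.comp
    (Yoneda.fullyFaithful.map_bijective X Y)

lemma isDense_of_fullyFaithful_restrictedYoneda [ι.Full]
    (hR : (restrictedYoneda ι).FullyFaithful) : ι.IsDense :=
  IsDense.of_fullyFaithful_restrictedULiftYoneda.{0}
    (hR.comp (fullyFaithfulULiftFunctor.whiskeringRight _))

noncomputable def isColimitCanonicalCocone [ι.IsDense] (X : M) :
    IsColimit (canonicalCocone ι X) :=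
  (ι.denseAt X).ofIsoColimit (Cocone.ext (Iso.refl X) fun _ =>
    (Category.comp_id _).trans (Category.id_comp _))

def coconeOfCompatible {X Y : M}
    {x : FamilyOfElements (yoneda.obj Y) (Sieve.coverByImage ι X).arrows} (hx : x.Compatible) :
    Cocone (CostructuredArrow.proj ι X ⋙ ι) where
  pt := Y
  ι.app j := x j.hom (in_coverByImage ι j.hom)
  ι.naturality j j' g := by
    dsimp
    rw [Category.comp_id]
    exact (hx _ (𝟙 _) _ _ ((CostructuredArrow.w g).trans (Category.id_comp _).symm)).trans
      (Category.id_comp _)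

lemma effectiveEpimorphic_coverByImage_of_isColimit {X : M}
    (hX : IsColimit (canonicalCocone ι X)) :
    (Sieve.coverByImage ι X).EffectiveEpimorphic := by
  rw [Sieve.EffectiveEpimorphic.iff_forall_isSheafFor_yoneda]
  intro Y x hx
  let c := coconeOfCompatible ι hx
  let t : X ⟶ Y := hX.desc c
  refine ⟨t, ?_, fun t' ht' => hX.hom_ext fun j => (ht' j.hom _).trans (hX.fac c j).symm⟩
  rintro Z f ⟨s⟩
  have hfac : s.map ≫ t = x s.map (in_coverByImage ι s.map) :=
    hX.fac c (CostructuredArrow.mk s.map)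
  have hcompat : s.lift ≫ (x s.map (in_coverByImage ι s.map) : ι.obj s.obj ⟶ Y) = x f ⟨s⟩ :=
    (hx s.lift (𝟙 _) _ _ (s.fac.trans (Category.id_comp _).symm)).trans (Category.id_comp _)
  change f ≫ t = _
  rw [← hcompat, ← hfac, s.fac_assoc]

theorem strictly_generating_tfae_general (ι : A ⥤ M) [ι.Full] :
    [ ∀ X : M, (Sieve.coverByImage ι X).EffectiveEpimorphic,
      ∀ (X X' : M) (f : X' ⟶ X), ((Sieve.coverByImage ι X).pullback f).EffectiveEpimorphic,
      ∀ X : M, Nonempty (IsColimit (canonicalCocone ι X)),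
      (yoneda ⋙ (Functor.whiskeringLeft _ _ _).obj ι.op).Full ∧
        (yoneda ⋙ (Functor.whiskeringLeft _ _ _).obj ι.op).Faithful ].TFAE := by
  tfae_have 1 → 2
  | h, X, _, f => effectiveEpimorphic_of_coverByImage_le ι h (coverByImage_le_pullback ι f)
  tfae_have 2 → 4
  | h => by
    have := isCoverDense_canonicalTopology ι h
    have hR := restrictedYoneda_map_bijective ι (Sheaf.canonicalTopology M)
    exact ⟨⟨(hR _ _).2⟩, ⟨fun e => (hR _ _).1 e⟩⟩
  tfae_have 4 → 3
  | ⟨_, _⟩, X => by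
    have := isDense_of_fullyFaithful_restrictedYoneda ι (.ofFullyFaithful _)
    exact ⟨isColimitCanonicalCocone ι X⟩
  tfae_have 3 → 1
  | h, X => effectiveEpimorphic_coverByImage_of_isColimit ι (h X).some
  tfae_finish

theorem strictly_generating_tfae (ι : A ⥤ M) [ι.Full] [ι.Faithful] :
    [ ∀ X : M, (Sieve.coverByImage ι X).EffectiveEpimorphic,
      ∀ (X X' : M) (f : X' ⟶ X), ((Sieve.coverByImage ι X).pullback f).EffectiveEpimorphic,
      ∀ X : M, Nonempty (IsColimit (canonicalCocone ι X)),
      (yoneda ⋙ (Functor.whiskeringLeft _ _ _).obj ι.op).Full ∧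
        (yoneda ⋙ (Functor.whiskeringLeft _ _ _).obj ι.op).Faithful ].TFAE :=
  strictly_generating_tfae_general ι

end Stmt0
end

section
/- Let A be a small category such that for every object a of A there exists a morphism e → yoneda(a) in Psh(A) from the terminal presheaf e (i.e., every object of A has a section over the final object). Then for every abelian presheaf F on A and every n ≥ 1, the n-th right derived functor of lim : Psh_Ab(A) ⥤ Ab vanishes at F: Rⁿlim(F) = 0. -/
/-!
A morphism `e ⟶ yoneda a` is the same as a cocone over `𝟭 A` with vertex `a`, i.e. a family of
maps `b ⟶ a` compatible with all morphisms of `A`. Such a cocone exhibits `lim F` as a retract of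
`F(a)`, naturally in `F`, so `lim` preserves epimorphisms (when `A` is empty, `lim` sends every
morphism to an isomorphism). Being also left exact, `lim` is exact, and an exact functor has
vanishing cohomology on an injective resolution in positive degrees.
-/

open CategoryTheory CategoryTheory.Limits

universe v

namespace Stmt17

variable (A : Type v) [SmallCategory A]

/-- The limit functor `lim : Psh_Ab(A) ⥤ Ab`, `F ↦ lim_{Aᵒᵖ} F`. -/
noncomputable abbrev limFunctor : (Aᵒᵖ ⥤ AddCommGrpCat.{v}) ⥤ AddCommGrpCat.{v} :=
  lim

instance : (limFunctor A).Additive where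
  map_add {F G f g} := by
    apply limit.hom_ext
    intro j
    simp

open Opposite

section LimPreservesEpimorphisms

variable {J : Type*} [Category J] {C : Type*} [Category C] [HasLimitsOfShape Jᵒᵖ C]

theorem limit_π_comp_lift_mapCone_op (c : Cocone (𝟭 J)) (G : Jᵒᵖ ⥤ C) :
    limit.π G (op c.pt) ≫ limit.lift G (G.mapCone c.op) = 𝟙 (limit G) :=
  limit.hom_ext fun j => by simp

theorem lift_mapCone_op_comp_limMap (c : Cocone (𝟭 J)) {F G : Jᵒᵖ ⥤ C} (φ : F ⟶ G) :
    limit.lift F (F.mapCone c.op) ≫ limMap φ =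
      φ.app (op c.pt) ≫ limit.lift G (G.mapCone c.op) :=
  limit.hom_ext fun j => by simp

theorem preservesEpimorphisms_lim_of_cocone [HasPushouts C] (c : Cocone (𝟭 J)) :
    (lim : (Jᵒᵖ ⥤ C) ⥤ C).PreservesEpimorphisms where
  preserves {F G} φ _ := by
    have : IsSplitEpi (limit.lift G (G.mapCone c.op)) :=
      ⟨⟨_, limit_π_comp_lift_mapCone_op c G⟩⟩
    have : Epi (limit.lift F (F.mapCone c.op) ≫ limMap φ) := by
      rw [lift_mapCone_op_comp_limMap]
      infer_instance
    exact epi_of_epi (limit.lift F (F.mapCone c.op)) (limMap φ)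

theorem preservesEpimorphisms_lim_of_isEmpty [IsEmpty J] :
    (lim : (Jᵒᵖ ⥤ C) ⥤ C).PreservesEpimorphisms where
  preserves φ _ :=
    have (j : Jᵒᵖ) : IsIso (φ.app j) := isEmptyElim j.unop
    have : IsIso φ := NatIso.isIso_of_isIso_app φ
    inferInstance

end LimPreservesEpimorphisms

def coconeOfSection {J : Type*} [Category J] {a : J} (s : (yoneda.obj a).sections) :
    Cocone (𝟭 J) where
  pt := a
  ι.app b := s.1 (op b)
  ι.naturality b b' f := by simpa using s.2 f.op

theorem isZero_rightDerived_succ_obj_of_preservesHomology {C D : Type*} [Category C]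
    [Category D] [Abelian C] [Abelian D] [HasInjectiveResolutions C] (F : C ⥤ D) [F.Additive]
    [F.PreservesHomology] (n : ℕ) (X : C) :
    IsZero ((F.rightDerived (n + 1)).obj X) := by
  let I := injectiveResolution X
  have hexact : ((F.mapHomologicalComplex _).obj I.cocomplex).ExactAt (n + 1) :=
    (HomologicalComplex.exactAt_iff' _ n (n + 1) (n + 2) (by simp) (by simp)).2
      ((I.exact_succ n).map F)
  exact IsZero.of_iso hexact.isZero_homology (I.isoRightDerivedObj F (n + 1))

theorem isZero_rightDerived_lim [EnoughInjectives (Aᵒᵖ ⥤ AddCommGrpCat.{v})]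
    (h : ∀ a : A, Nonempty ((⊤_ (Aᵒᵖ ⥤ Type v)) ⟶ yoneda.obj a))
    (F : Aᵒᵖ ⥤ AddCommGrpCat.{v}) (n : ℕ) (hn : 1 ≤ n) :
    IsZero (((limFunctor A).rightDerived n).obj F) := by
  have : (limFunctor A).PreservesEpimorphisms := by
    rcases isEmpty_or_nonempty A with _ | ⟨⟨a⟩⟩
    · exact preservesEpimorphisms_lim_of_isEmpty
    · exact preservesEpimorphisms_lim_of_cocone <| coconeOfSection <|
        ((yoneda.obj a).sectionsEquivHom PUnit).symm (terminal.from _ ≫ (h a).some)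
  have : (limFunctor A).PreservesHomology :=
    Functor.preservesHomology_of_preservesEpis_and_kernels _
  obtain ⟨m, rfl⟩ := Nat.exists_eq_add_of_le' hn
  exact isZero_rightDerived_succ_obj_of_preservesHomology (limFunctor A) m F

end Stmt17
end

section
/- Let A be a small category and N an abelian category with all small colimits and enough projectives. Then the functor category Aᵒᵖ ⥤ N, which is abelian with kernels and cokernels computed pointwise, has enough projectives: every object of Aᵒᵖ ⥤ N is the target of an epimorphism from a projective object. -/
/-!
Each evaluation functor `(Aᵒᵖ ⥤ N) ⥤ N` at `a` has a left adjoint `L_a` (built from coproducts)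
and preserves epimorphisms, so `L_a` sends projectives to projectives. For a presheaf `M`, the
coproduct over `a` of `L_a` applied to a projective cover of `M a` is projective, and its canonical
map to `M` is an epimorphism because at each `a` the projective cover of `M a` factors through it.
-/

open CategoryTheory CategoryTheory.Limits

universe v u

theorem CategoryTheory.EnoughProjectives.of_adjunctions.{w, u₁, u₂, v₂} {D : Type u₁}
    [Category.{w} D] {ι : Type w} {C : ι → Type u₂} [∀ i, Category.{v₂} (C i)]
    [∀ i, EnoughProjectives (C i)] [HasCoproductsOfShape ι D] {F : ∀ i, C i ⥤ D}
    {G : ∀ i, D ⥤ C i} (adj : ∀ i, F i ⊣ G i) [∀ i, (G i).PreservesEpimorphisms]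
    (epi_of_epi_map : ∀ {X Y : D} (f : X ⟶ Y), (∀ i, Epi ((G i).map f)) → Epi f) :
    EnoughProjectives D where
  presentation X := by
    let P (i : ι) : D := (F i).obj (Projective.over ((G i).obj X))
    have (i : ι) : Projective (P i) := (adj i).map_projective _ inferInstance
    let π : ∐ P ⟶ X := Limits.Sigma.desc fun i => ((adj i).homEquiv _ _).symm (Projective.π _)
    have : Epi π := epi_of_epi_map π fun i => by
      have hfac : ((adj i).unit.app _ ≫ (G i).map (Limits.Sigma.ι P i)) ≫ (G i).map π =
          Projective.π ((G i).obj X) := by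
        rw [Category.assoc, ← Functor.map_comp, Limits.Sigma.ι_desc]
        exact ((adj i).homEquiv_unit _ _ _).symm.trans (Equiv.apply_symm_apply _ _)
      exact epi_of_epi_fac hfac
    exact ⟨⟨_, π⟩⟩

theorem enoughProjectives_functorCategory_general
    (A : Type v) [SmallCategory A] (N : Type u) [Category.{v} N]
    [HasColimitsOfSize.{v, v} N] [EnoughProjectives N] :
    EnoughProjectives (Aᵒᵖ ⥤ N) :=
  EnoughProjectives.of_adjunctions (fun a => evaluationAdjunctionRight N a)
    fun f hf => @NatTrans.epi_of_epi_app _ _ _ _ _ _ f hf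

theorem enoughProjectives_functorCategory
    (A : Type v) [SmallCategory A] (N : Type u) [Category.{v} N]
    [Abelian N] [HasColimitsOfSize.{v, v} N] [EnoughProjectives N] :
    EnoughProjectives (Aᵒᵖ ⥤ N) :=
  enoughProjectives_functorCategory_general A N
end
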